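/- In the Airdrop system, for every system state σ, the MEV equals the contract balance: MEV Airdrop σ (σ.s.bal τ₀). -/
import Mathlib


open scoped NNReal

/-! The Airdrop contract: a single token type, a contract balance, a cumulative
honest wallet, and a mempool of `drop` transactions. A transaction `drop P v`
(with `v > 0`) transfers `v` tokens from the contract balance to `P`, failing
if `v` exceeds the balance. The adversary can either execute an adversary-signed
drop or execute a mempool transaction. Token τ₀ has unit price, so the gain of
the adversary is the change of its token holdings. -/

inductive Participant where
  | Hon : String → Participant
  | Adv : Participant
deriving DecidableEq

inductive Token where
  | τ₀ : Token
deriving DecidableEq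

abbrev TxId := ℕ

/-- A `drop` transaction: participant `P` withdraws `v > 0` tokens. -/
structure Tx where
  P : Participant
  v : ℝ
  v_pos : 0 < v

/-- The honest part of the system state. -/
structure AState where
  bal : Token → ℝ≥0
  wal : Token → ℝ≥0
  mempool : List (TxId × Tx)

/-- System state: adversary wallet plus honest state. -/
structure ADState where
  Δ : Token → ℝ
  s : AState

/-- Semantics of a `drop P v` transaction: transfer `v` tokens from the
contract balance to `P`, failing if the balance is insufficient. -/
noncomputable def dropSem (P : Participant) (v : ℝ) (σ : ADState) : Option ADState :=
  if v ≤ (σ.s.bal .τ₀ : ℝ) then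
    some { Δ := if P = .Adv then fun τ => σ.Δ τ + v else σ.Δ
         , s := { bal := fun τ => σ.s.bal τ - v.toNNReal
                , wal := if P = .Adv then σ.s.wal else fun τ => σ.s.wal τ + v.toNNReal
                , mempool := σ.s.mempool } }
  else none

/-- Adversarial moves: craft an adversary-signed drop, or execute a mempool
transaction. -/
inductive Move where
  | adv : (v : ℝ) → 0 < v → Move
  | mempool : TxId → Move

/-- Semantics of adversarial moves. A successfully executed mempool transaction
is removed from the mempool. -/
noncomputable def semMove (σ : ADState) : Move → Option ADState
  | .adv v _ => dropSem .Adv v σ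
  | .mempool id =>
    match σ.s.mempool.find? (fun p => p.1 == id) with
    | none => none
    | some (_, tx) =>
      match dropSem tx.P tx.v σ with
      | none => none
      | some σ' =>
        some { Δ := σ'.Δ
             , s := { bal := σ'.s.bal, wal := σ'.s.wal
                    , mempool := σ.s.mempool.filter (fun p => p.1 != id) } }

/-- Composed effect of a list of moves (failing moves are skipped). -/
noncomputable def semMoves (σ : ADState) : List Move → ADState
  | [] => σ
  | m :: ms =>
    match semMove σ m with
    | none => semMoves σ ms
    | some σ' => semMoves σ' ms

/-- Adversarial gain of a list of moves (token τ₀ has unit price). -/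
noncomputable def gainMoves (σ : ADState) (tr : List Move) : ℝ :=
  (semMoves σ tr).Δ .τ₀ - σ.Δ .τ₀

/-- Maximal extractable value. -/
structure MEV (σ : ADState) (v : ℝ) : Prop where
  trace_reaches_v : ∃ tr, gainMoves σ tr = v
  other_traces_worse : ∀ tr, gainMoves σ tr ≤ v

lemma dropSem_spec {P : Participant} {v : ℝ} {σ σ' : ADState}
    (h : dropSem P v σ = some σ') (hv : 0 ≤ v) :
    σ'.Δ .τ₀ - σ.Δ .τ₀ ≤ (σ.s.bal .τ₀ : ℝ) - (σ'.s.bal .τ₀ : ℝ) := by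
  unfold dropSem at h
  split at h
  · case isTrue hle =>
    injection h with h; subst h
    have hb : ((σ.s.bal .τ₀ - v.toNNReal : ℝ≥0) : ℝ) = (σ.s.bal .τ₀ : ℝ) - v := by
      rw [NNReal.coe_sub (by rwa [Real.toNNReal_le_iff_le_coe]),
        Real.coe_toNNReal v hv]
    simp only [hb]
    by_cases hP : P = .Adv <;> simp [hP] <;> linarith
  · exact absurd h (by simp)

lemma semMove_spec {σ σ' : ADState} {m : Move} (h : semMove σ m = some σ') :
    σ'.Δ .τ₀ - σ.Δ .τ₀ ≤ (σ.s.bal .τ₀ : ℝ) - (σ'.s.bal .τ₀ : ℝ) := by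
  cases m with
  | adv v hv => exact dropSem_spec h hv.le
  | mempool id =>
    simp only [semMove] at h
    cases hfind : σ.s.mempool.find? (fun p => p.1 == id) with
    | none => rw [hfind] at h; exact absurd h (by simp)
    | some p =>
      obtain ⟨i, tx⟩ := p
      rw [hfind] at h
      dsimp only at h
      cases hdrop : dropSem tx.P tx.v σ with
      | none => rw [hdrop] at h; exact absurd h (by simp)
      | some σ'' =>
        rw [hdrop] at h
        injection h with h; subst h
        simpa using dropSem_spec hdrop tx.v_pos.le

lemma semMoves_spec (tr : List Move) (σ : ADState) :
    (semMoves σ tr).Δ .τ₀ - σ.Δ .τ₀ ≤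
      (σ.s.bal .τ₀ : ℝ) - ((semMoves σ tr).s.bal .τ₀ : ℝ) := by
  induction tr generalizing σ with
  | nil => simp [semMoves]
  | cons m ms ih =>
    unfold semMoves
    split
    · exact ih σ
    · case h_2 σ' heq =>
      have h1 := semMove_spec heq
      have h2 := ih σ'
      linarith

/-- In the Airdrop system, the MEV of any state is the contract balance. -/
theorem MEV_Airdrop (σ : ADState) : MEV σ (σ.s.bal .τ₀ : ℝ) := by
  constructor
  · rcases eq_or_lt_of_le (σ.s.bal .τ₀).coe_nonneg with hz | hp
    · exact ⟨[], by simp [gainMoves, semMoves, ← hz]⟩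
    · refine ⟨[.adv (σ.s.bal .τ₀) hp], ?_⟩
      simp only [gainMoves, semMoves, semMove, dropSem, le_refl, if_pos]
      simp
  · intro tr
    have h := semMoves_spec tr σ
    have := ((semMoves σ tr).s.bal .τ₀).coe_nonneg
    simp only [gainMoves]
    linarith
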